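/- arXiv:2007.01168 — 6 statements merged into one kernel-verified Lean document; each statement's English description precedes it below -/
import Mathlib

section
/- In a recollement of abelian categories (A, B, C), if the functor i* is exact then the composite i^! ∘ j_! is zero, and if the functor i^! is exact then the composite i* ∘ j_* is zero. -/
open CategoryTheory Limits

universe u₁ u₂ u₃ v₁ v₂ v₃

/-- A recollement of abelian categories `(𝒜, ℬ, 𝒞)`. -/
structure Recollement (𝒜 : Type u₁) (ℬ : Type u₂) (𝒞 : Type u₃)
    [Category.{v₁} 𝒜] [Category.{v₂} ℬ] [Category.{v₃} 𝒞]
    [Abelian 𝒜] [Abelian ℬ] [Abelian 𝒞] where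
  /-- `i^* : ℬ → 𝒜` -/
  iStar : ℬ ⥤ 𝒜
  /-- `i_* : 𝒜 → ℬ` -/
  iIns : 𝒜 ⥤ ℬ
  /-- `i^! : ℬ → 𝒜` -/
  iShriek : ℬ ⥤ 𝒜
  /-- `j_! : 𝒞 → ℬ` -/
  jShriek : 𝒞 ⥤ ℬ
  /-- `j^* : ℬ → 𝒞` -/
  jStar : ℬ ⥤ 𝒞
  /-- `j_* : 𝒞 → ℬ` -/
  jIns : 𝒞 ⥤ ℬ
  iStar_additive : iStar.Additive
  iIns_additive : iIns.Additive
  iShriek_additive : iShriek.Additive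
  jShriek_additive : jShriek.Additive
  jStar_additive : jStar.Additive
  jIns_additive : jIns.Additive
  /-- the adjoint pair `(i^*, i_*)` -/
  adj₁ : iStar ⊣ iIns
  /-- the adjoint pair `(i_*, i^!)` -/
  adj₂ : iIns ⊣ iShriek
  /-- the adjoint pair `(j_!, j^*)` -/
  adj₃ : jShriek ⊣ jStar
  /-- the adjoint pair `(j^*, j_*)` -/
  adj₄ : jStar ⊣ jIns
  iIns_full : iIns.Full
  iIns_faithful : iIns.Faithful
  jShriek_full : jShriek.Full
  jShriek_faithful : jShriek.Faithful
  jIns_full : jIns.Full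
  jIns_faithful : jIns.Faithful
  /-- `Im i_* = Ker j^*` -/
  essImage_iIns_eq_ker_jStar : ∀ b : ℬ, iIns.essImage b ↔ IsZero (jStar.obj b)

/-! If `i^*` is exact, every morphism `f : i_* a ⟶ j_! c` vanishes. Its image is a quotient of
`i_* a`, so it lies in `Ker j^* = Im i_*`, where `i^*` is a quasi-inverse of `i_*`; it is also a
subobject of `j_! c`, and `i^* j_! c = 0` because `Hom(i^* j_! c, a) ≅ Hom(c, j^* i_* a) = 0`.
Hence the image is zero. Taking `f` to be the counit `i_* i^! j_! c ⟶ j_! c` of `i_* ⊣ i^!`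
shows `i^! j_! c = 0`. The second claim is the dual argument with `j_*`, `i^!` and `i^* ⊣ i_*`. -/

namespace CategoryTheory.Adjunction

variable {C D : Type*} [Category C] [Category D] {F : C ⥤ D} {G : D ⥤ C}

lemma eq_zero_of_isZero_right_obj [HasZeroMorphisms D] (adj : F ⊣ G) {c : C} {d : D}
    (hd : IsZero (G.obj d)) (f : F.obj c ⟶ d) : f = 0 :=
  (adj.homEquiv c d).injective (hd.eq_of_tgt _ _)

lemma eq_zero_of_isZero_left_obj [HasZeroMorphisms C] (adj : F ⊣ G) {c : C} {d : D}
    (hc : IsZero (F.obj c)) (f : c ⟶ G.obj d) : f = 0 :=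
  (adj.homEquiv c d).symm.injective (hc.eq_of_src _ _)

lemma isZero_right_obj_of_forall_eq_zero [HasZeroMorphisms C] [HasZeroMorphisms D]
    (adj : F ⊣ G) {d : D} (h : ∀ f : F.obj (G.obj d) ⟶ d, f = 0) : IsZero (G.obj d) :=
  (IsZero.iff_id_eq_zero _).mpr <| (adj.homEquiv _ d).symm.injective ((h _).trans (h _).symm)

lemma isZero_left_obj_of_forall_eq_zero [HasZeroMorphisms C] [HasZeroMorphisms D]
    (adj : F ⊣ G) {c : C} (h : ∀ f : c ⟶ G.obj (F.obj c), f = 0) : IsZero (F.obj c) :=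
  (IsZero.iff_id_eq_zero _).mpr <| (adj.homEquiv c _).injective ((h _).trans (h _).symm)

end CategoryTheory.Adjunction

namespace Recollement

variable {𝒜 : Type u₁} {ℬ : Type u₂} {𝒞 : Type u₃}
  [Category.{v₁} 𝒜] [Category.{v₂} ℬ] [Category.{v₃} 𝒞]
  [Abelian 𝒜] [Abelian ℬ] [Abelian 𝒞] (R : Recollement 𝒜 ℬ 𝒞)

attribute [local instance] iIns_additive iIns_full iIns_faithful

lemma isZero_jStar_obj_iIns (a : 𝒜) : IsZero (R.jStar.obj (R.iIns.obj a)) :=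
  (R.essImage_iIns_eq_ker_jStar _).mp ⟨a, ⟨Iso.refl _⟩⟩

lemma isZero_iStar_obj_jShriek (c : 𝒞) : IsZero (R.iStar.obj (R.jShriek.obj c)) :=
  R.adj₁.isZero_left_obj_of_forall_eq_zero fun _ =>
    R.adj₃.eq_zero_of_isZero_right_obj (R.isZero_jStar_obj_iIns _) _

lemma isZero_iShriek_obj_jIns (c : 𝒞) : IsZero (R.iShriek.obj (R.jIns.obj c)) :=
  R.adj₂.isZero_right_obj_of_forall_eq_zero fun _ =>
    R.adj₄.eq_zero_of_isZero_left_obj (R.isZero_jStar_obj_iIns _) _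

lemma isZero_of_isZero_jStar_of_isZero_iStar {b : ℬ} (hj : IsZero (R.jStar.obj b))
    (hi : IsZero (R.iStar.obj b)) : IsZero b := by
  obtain ⟨a, ⟨e⟩⟩ := (R.essImage_iIns_eq_ker_jStar b).mpr hj
  have : IsIso R.adj₁.counit := R.adj₁.counit_isIso_of_R_fully_faithful
  have ha : IsZero a := (hi.of_iso (R.iStar.mapIso e)).of_iso (asIso (R.adj₁.counit.app a)).symm
  exact (R.iIns.map_isZero ha).of_iso e.symm

lemma isZero_of_isZero_jStar_of_isZero_iShriek {b : ℬ} (hj : IsZero (R.jStar.obj b))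
    (hi : IsZero (R.iShriek.obj b)) : IsZero b := by
  obtain ⟨a, ⟨e⟩⟩ := (R.essImage_iIns_eq_ker_jStar b).mpr hj
  have : IsIso R.adj₂.unit := R.adj₂.unit_isIso_of_L_fully_faithful
  have ha : IsZero a := (hi.of_iso (R.iShriek.mapIso e)).of_iso (asIso (R.adj₂.unit.app a))
  exact (R.iIns.map_isZero ha).of_iso e.symm

lemma eq_zero_of_iIns_obj_to_jShriek_obj [R.iStar.PreservesMonomorphisms] {a : 𝒜} {c : 𝒞}
    (f : R.iIns.obj a ⟶ R.jShriek.obj c) : f = 0 := by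
  have : R.jStar.PreservesEpimorphisms := R.jStar.preservesEpimorphisms_of_adjunction R.adj₄
  have hj : IsZero (R.jStar.obj (image f)) :=
    IsZero.of_epi (R.jStar.map (factorThruImage f)) (R.isZero_jStar_obj_iIns a)
  have hi : IsZero (R.iStar.obj (image f)) :=
    IsZero.of_mono (R.iStar.map (image.ι f)) (R.isZero_iStar_obj_jShriek c)
  rw [← image.fac f, (R.isZero_of_isZero_jStar_of_isZero_iStar hj hi).eq_zero_of_src (image.ι f),
    comp_zero]

lemma eq_zero_of_jIns_obj_to_iIns_obj [R.iShriek.PreservesEpimorphisms] {a : 𝒜} {c : 𝒞}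
    (f : R.jIns.obj c ⟶ R.iIns.obj a) : f = 0 := by
  have : R.jStar.PreservesMonomorphisms := R.jStar.preservesMonomorphisms_of_adjunction R.adj₃
  have hj : IsZero (R.jStar.obj (image f)) :=
    IsZero.of_mono (R.jStar.map (image.ι f)) (R.isZero_jStar_obj_iIns a)
  have hi : IsZero (R.iShriek.obj (image f)) :=
    IsZero.of_epi (R.iShriek.map (factorThruImage f)) (R.isZero_iShriek_obj_jIns c)
  rw [← image.fac f, (R.isZero_of_isZero_jStar_of_isZero_iShriek hj hi).eq_zero_of_src
    (image.ι f), comp_zero]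

lemma isZero_iShriek_obj_jShriek [R.iStar.PreservesMonomorphisms] (c : 𝒞) :
    IsZero (R.iShriek.obj (R.jShriek.obj c)) :=
  R.adj₂.isZero_right_obj_of_forall_eq_zero R.eq_zero_of_iIns_obj_to_jShriek_obj

lemma isZero_iStar_obj_jIns [R.iShriek.PreservesEpimorphisms] (c : 𝒞) :
    IsZero (R.iStar.obj (R.jIns.obj c)) :=
  R.adj₁.isZero_left_obj_of_forall_eq_zero R.eq_zero_of_jIns_obj_to_iIns_obj

end Recollement

/-- In a recollement `(𝒜, ℬ, 𝒞)`, if `i^*` is exact then `i^! ∘ j_! = 0`, and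
if `i^!` is exact then `i^* ∘ j_* = 0`. -/
theorem stmt3 (𝒜 : Type u₁) (ℬ : Type u₂) (𝒞 : Type u₃)
    [Category.{v₁} 𝒜] [Category.{v₂} ℬ] [Category.{v₃} 𝒞]
    [Abelian 𝒜] [Abelian ℬ] [Abelian 𝒞] (R : Recollement 𝒜 ℬ 𝒞) :
    ((PreservesFiniteLimits R.iStar ∧ PreservesFiniteColimits R.iStar) →
      IsZero (R.jShriek ⋙ R.iShriek)) ∧
    ((PreservesFiniteLimits R.iShriek ∧ PreservesFiniteColimits R.iShriek) →
      IsZero (R.jIns ⋙ R.iStar)) :=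
  ⟨fun ⟨_, _⟩ => Functor.isZero _ R.isZero_iShriek_obj_jShriek,
    fun ⟨_, _⟩ => Functor.isZero _ R.isZero_iStar_obj_jIns⟩
end

section
/- In a recollement of abelian categories (A, B, C), if the functor i* is exact then the functor j_! is exact, and if the functor i^! is exact then the functor j_* is exact. -/
open CategoryTheory Limits

universe u₁ u₂ u₃ v₁ v₂ v₃

/-- In a recollement `(𝒜, ℬ, 𝒞)`, if `i^*` is exact then `j_!` is exact, and if
`i^!` is exact then `j_*` is exact. -/
theorem stmt4 (𝒜 : Type u₁) (ℬ : Type u₂) (𝒞 : Type u₃)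
    [Category.{v₁} 𝒜] [Category.{v₂} ℬ] [Category.{v₃} 𝒞]
    [Abelian 𝒜] [Abelian ℬ] [Abelian 𝒞] (R : Recollement 𝒜 ℬ 𝒞) :
    ((PreservesFiniteLimits R.iStar ∧ PreservesFiniteColimits R.iStar) →
      PreservesFiniteLimits R.jShriek ∧ PreservesFiniteColimits R.jShriek) ∧
    ((PreservesFiniteLimits R.iShriek ∧ PreservesFiniteColimits R.iShriek) →
      PreservesFiniteLimits R.jIns ∧ PreservesFiniteColimits R.jIns) := by
  haveI := R.iStar_additive
  haveI := R.iIns_additive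
  haveI := R.iShriek_additive
  haveI := R.jShriek_additive
  haveI := R.jStar_additive
  haveI := R.jIns_additive
  haveI := R.iIns_full
  haveI := R.iIns_faithful
  haveI := R.jShriek_full
  haveI := R.jShriek_faithful
  haveI := R.jIns_full
  haveI := R.jIns_faithful
  constructor
  · rintro ⟨h₁, h₂⟩
    haveI : PreservesColimitsOfSize.{0, 0} R.jShriek := R.adj₃.leftAdjoint_preservesColimits
    haveI : PreservesLimitsOfSize.{0, 0} R.jStar := R.adj₃.rightAdjoint_preservesLimits
    -- `i^* ∘ j_! = 0`
    have hz : ∀ Z : 𝒞, IsZero (R.iStar.obj (R.jShriek.obj Z)) := by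
      intro Z
      rw [IsZero.iff_id_eq_zero]
      have h0 : IsZero (R.jStar.obj (R.iIns.obj (R.iStar.obj (R.jShriek.obj Z)))) :=
        (R.essImage_iIns_eq_ker_jStar _).mp ⟨_, ⟨Iso.refl _⟩⟩
      apply (R.adj₁.homEquiv _ _).injective
      apply (R.adj₃.homEquiv _ _).injective
      exact h0.eq_of_tgt _ _
    haveI : R.jShriek.PreservesMonomorphisms := by
      constructor
      intro X Y f hf
      set g := R.jShriek.map f with hg
      have hK : IsZero (kernel g) := by
        -- `j^*` of the kernel is zero
        have hmono : Mono (R.jStar.map g) := by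
          have hnat : R.adj₃.unit.app X ≫ (R.jShriek ⋙ R.jStar).map f =
              f ≫ R.adj₃.unit.app Y := (R.adj₃.unit.naturality f).symm
          have heq : (R.jShriek ⋙ R.jStar).map f =
              inv (R.adj₃.unit.app X) ≫ (f ≫ R.adj₃.unit.app Y) := by
            rw [IsIso.eq_inv_comp, hnat]
          show Mono ((R.jShriek ⋙ R.jStar).map f)
          rw [heq]
          exact mono_comp _ _
        have hjK : IsZero (R.jStar.obj (kernel g)) := by
          refine IsZero.of_iso ?_ (PreservesKernel.iso R.jStar g)
          exact IsZero.of_iso (isZero_zero _) (kernel.ofMono (R.jStar.map g))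
        obtain ⟨A, ⟨e⟩⟩ := (R.essImage_iIns_eq_ker_jStar _).mpr hjK
        -- `i^*` of the kernel is zero
        have hiK : IsZero (R.iStar.obj (kernel g)) := by
          refine IsZero.of_iso ?_ (PreservesKernel.iso R.iStar g)
          exact IsZero.of_mono_eq_zero (kernel.ι (R.iStar.map g))
            ((hz X).eq_of_tgt _ _)
        have hA : IsZero A :=
          IsZero.of_iso (IsZero.of_iso hiK (R.iStar.mapIso e))
            (asIso (R.adj₁.counit.app A)).symm
        exact IsZero.of_iso (R.iIns.map_isZero hA) e.symm
      have : kernel.ι g = 0 := hK.eq_of_src _ _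
      exact Preadditive.mono_of_kernel_zero this
    haveI : R.jShriek.PreservesHomology :=
      Functor.preservesHomology_of_preservesMonos_and_cokernels _
    exact ⟨R.jShriek.preservesFiniteLimits_of_preservesHomology,
      R.jShriek.preservesFiniteColimits_of_preservesHomology⟩
  · rintro ⟨h₁, h₂⟩
    haveI : PreservesLimitsOfSize.{0, 0} R.jIns := R.adj₄.rightAdjoint_preservesLimits
    haveI : PreservesColimitsOfSize.{0, 0} R.jStar := R.adj₄.leftAdjoint_preservesColimits
    -- `i^! ∘ j_* = 0`
    have hz : ∀ Z : 𝒞, IsZero (R.iShriek.obj (R.jIns.obj Z)) := by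
      intro Z
      rw [IsZero.iff_id_eq_zero]
      have h0 : IsZero (R.jStar.obj (R.iIns.obj (R.iShriek.obj (R.jIns.obj Z)))) :=
        (R.essImage_iIns_eq_ker_jStar _).mp ⟨_, ⟨Iso.refl _⟩⟩
      apply (R.adj₂.homEquiv _ _).symm.injective
      apply (R.adj₄.homEquiv _ _).symm.injective
      exact h0.eq_of_src _ _
    haveI : R.jIns.PreservesEpimorphisms := by
      constructor
      intro X Y f hf
      set g := R.jIns.map f with hg
      have hQ : IsZero (cokernel g) := by
        -- `j^*` of the cokernel is zero
        have hepi : Epi (R.jStar.map g) := by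
          have heq : (R.jIns ⋙ R.jStar).map f =
              (R.adj₄.counit.app X ≫ f) ≫ inv (R.adj₄.counit.app Y) := by
            rw [IsIso.eq_comp_inv]
            exact R.adj₄.counit.naturality f |>.trans (by simp)
          show Epi ((R.jIns ⋙ R.jStar).map f)
          rw [heq]
          exact epi_comp _ _
        have hjQ : IsZero (R.jStar.obj (cokernel g)) := by
          refine IsZero.of_iso ?_ (PreservesCokernel.iso R.jStar g)
          exact IsZero.of_iso (isZero_zero _) (cokernel.ofEpi (R.jStar.map g))
        obtain ⟨A, ⟨e⟩⟩ := (R.essImage_iIns_eq_ker_jStar _).mpr hjQ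
        -- `i^!` of the cokernel is zero
        have hiQ : IsZero (R.iShriek.obj (cokernel g)) := by
          refine IsZero.of_iso ?_ (PreservesCokernel.iso R.iShriek g)
          exact IsZero.of_epi_eq_zero (cokernel.π (R.iShriek.map g))
            ((hz Y).eq_of_src _ _)
        have hA : IsZero A :=
          IsZero.of_iso (IsZero.of_iso hiQ (R.iShriek.mapIso e))
            (asIso (R.adj₂.unit.app A))
        exact IsZero.of_iso (R.iIns.map_isZero hA) e.symm
      have : cokernel.π g = 0 := hQ.eq_of_tgt _ _
      exact Preadditive.epi_of_cokernel_zero this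
    haveI : R.jIns.PreservesHomology :=
      Functor.preservesHomology_of_preservesEpis_and_kernels _
    exact ⟨R.jIns.preservesFiniteLimits_of_preservesHomology,
      R.jIns.preservesFiniteColimits_of_preservesHomology⟩
end

section
/- Let (A, B, C) be a recollement of abelian categories, and let (T', F') and (T'', F'') be torsion pairs in A and C respectively. Define T = {B ∈ B : i*(B) ∈ T' and j^*(B) ∈ T''} and F = {B ∈ B : i^!(B) ∈ F' and j^*(B) ∈ F''}. Then Hom_B(X, Y) = 0 for all X ∈ T and Y ∈ F. -/
open CategoryTheory Limits

universe u₁ u₂ u₃ v₁ v₂ v₃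

/-- A pair of full subcategories (given as sets of objects, closed under
isomorphisms) `(T, F)` of an abelian category is a torsion pair if all
morphisms from `T` to `F` vanish and every object fits in a short exact
sequence with first term in `T` and third term in `F`. -/
structure IsTorsionPair {𝒜 : Type u₁} [Category.{v₁} 𝒜] [Abelian 𝒜]
    (T F : Set 𝒜) : Prop where
  mem_T_of_iso : ∀ {X Y : 𝒜}, (X ≅ Y) → X ∈ T → Y ∈ T
  mem_F_of_iso : ∀ {X Y : 𝒜}, (X ≅ Y) → X ∈ F → Y ∈ F
  hom_eq_zero : ∀ {X Y : 𝒜}, X ∈ T → Y ∈ F → ∀ f : X ⟶ Y, f = 0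
  exists_ses : ∀ M : 𝒜, ∃ (X Y : 𝒜) (f : X ⟶ M) (g : M ⟶ Y) (w : f ≫ g = 0),
    X ∈ T ∧ Y ∈ F ∧ (ShortComplex.mk f g w).ShortExact

/-!
Since `j^* f` goes from `T''` to `F''`, it vanishes, so `f` factors through the kernel of the
unit `Y ⟶ j_* j^* Y`. That kernel is killed by `j^*`, hence is `i_* A`, and `f = g ≫ m` with
`m : i_* A ⟶ Y` mono. Transposing `g` along `i^* ⊣ i_*` and `m` along `i_* ⊣ i^!` gives maps
`i^* X ⟶ A ⟶ i^! Y` whose composite goes from `T'` to `F'`, so vanishes; the second is mono,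
hence the first, and with it `g`, is zero.
-/

namespace Recollement

variable {𝒜 : Type u₁} {ℬ : Type u₂} {𝒞 : Type u₃}
  [Category.{v₁} 𝒜] [Category.{v₂} ℬ] [Category.{v₃} 𝒞]
  [Abelian 𝒜] [Abelian ℬ] [Abelian 𝒞] (R : Recollement 𝒜 ℬ 𝒞)

instance : R.iIns.Additive := R.iIns_additive
instance : R.jIns.Additive := R.jIns_additive
instance : R.iIns.Faithful := R.iIns_faithful

/-- The triangle identity makes `j^* η_Y` a split mono, so the mono `j^* (ker η_Y ⟶ Y)` is zero. -/
lemma isZero_jStar_obj_kernel_unit (Y : ℬ) :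
    IsZero (R.jStar.obj (kernel (R.adj₄.unit.app Y))) := by
  have : IsSplitMono (R.jStar.map (R.adj₄.unit.app Y)) :=
    IsSplitMono.mk' ⟨_, R.adj₄.left_triangle_components Y⟩
  have : PreservesLimitsOfSize R.jStar := R.adj₃.rightAdjoint_preservesLimits
  refine IsZero.of_mono_eq_zero (R.jStar.map (kernel.ι _)) ?_
  rw [← cancel_mono (R.jStar.map (R.adj₄.unit.app Y)), ← R.jStar.map_comp,
    kernel.condition, Functor.map_zero, zero_comp]

lemma exists_mono_factorization_of_jStar_map_eq_zero {X Y : ℬ} (f : X ⟶ Y)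
    (hf : R.jStar.map f = 0) :
    ∃ (A : 𝒜) (g : X ⟶ R.iIns.obj A) (m : R.iIns.obj A ⟶ Y), Mono m ∧ g ≫ m = f := by
  have hfη : f ≫ R.adj₄.unit.app Y = 0 := by
    rw [← R.adj₄.unit_naturality, hf, Functor.map_zero, comp_zero]
  obtain ⟨A, ⟨e⟩⟩ := (R.essImage_iIns_eq_ker_jStar _).2 (R.isZero_jStar_obj_kernel_unit Y)
  exact ⟨A, kernel.lift _ f hfη ≫ e.inv, e.hom ≫ kernel.ι _, mono_comp _ _, by simp⟩

/-- Since `i_*` is faithful, the unit of `i_* ⊣ i^!` is mono, hence so is the transpose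
`A ⟶ i^! Y` of `m`. -/
lemma eq_zero_of_comp_mono_of_hom_iStar_iShriek_eq_zero {X Y : ℬ} {A : 𝒜}
    (g : X ⟶ R.iIns.obj A) (m : R.iIns.obj A ⟶ Y) [Mono m]
    (h : ∀ u : R.iStar.obj X ⟶ R.iShriek.obj Y, u = 0) : g = 0 := by
  have : PreservesLimitsOfSize R.iShriek := R.adj₂.rightAdjoint_preservesLimits
  have : Mono (R.adj₂.homEquiv _ _ m) := by
    rw [Adjunction.homEquiv_unit]
    infer_instance
  have hg : (R.adj₁.homEquiv _ _).symm g = 0 := by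
    rw [← cancel_mono (R.adj₂.homEquiv _ _ m), h (_ ≫ _), zero_comp]
  rw [← (R.adj₁.homEquiv _ _).apply_symm_apply g, hg, Adjunction.homEquiv_unit,
    Functor.map_zero, comp_zero]

end Recollement

/-- Given a recollement `(𝒜, ℬ, 𝒞)` and torsion pairs `(T', F')` in `𝒜` and
`(T'', F'')` in `𝒞`, set `T = {B | i^*(B) ∈ T' ∧ j^*(B) ∈ T''}` and
`F = {B | i^!(B) ∈ F' ∧ j^*(B) ∈ F''}`. Then `Hom_ℬ(X, Y) = 0` for all
`X ∈ T` and `Y ∈ F`. -/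
theorem stmt12 (𝒜 : Type u₁) (ℬ : Type u₂) (𝒞 : Type u₃)
    [Category.{v₁} 𝒜] [Category.{v₂} ℬ] [Category.{v₃} 𝒞]
    [Abelian 𝒜] [Abelian ℬ] [Abelian 𝒞] (R : Recollement 𝒜 ℬ 𝒞)
    (T' F' : Set 𝒜) (T'' F'' : Set 𝒞)
    (h' : IsTorsionPair T' F') (h'' : IsTorsionPair T'' F'') :
    ∀ X ∈ {B : ℬ | R.iStar.obj B ∈ T' ∧ R.jStar.obj B ∈ T''},
      ∀ Y ∈ {B : ℬ | R.iShriek.obj B ∈ F' ∧ R.jStar.obj B ∈ F''},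
        ∀ f : X ⟶ Y, f = 0 := by
  intro X hX Y hY f
  obtain ⟨A, g, m, hm, rfl⟩ :=
    R.exists_mono_factorization_of_jStar_map_eq_zero f (h''.hom_eq_zero hX.2 hY.2 _)
  rw [R.eq_zero_of_comp_mono_of_hom_iStar_iShriek_eq_zero g m (h'.hom_eq_zero hX.1 hY.1),
    zero_comp]
end

section
/- Let (A, B, C) be a recollement of abelian categories where B and C have enough injective objects, and suppose i^! and j_! are exact. Let (T', F') and (T'', F'') be tilting torsion pairs in A and C respectively, and let (T, F) be the glued torsion pair in B, where T = {B : i*(B) ∈ T', j^*(B) ∈ T''} and F = {B : i^!(B) ∈ F', j^*(B) ∈ F''}. Then (T, F) is a tilting torsion pair in B, i.e., T contains all injective objects of B. -/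
open CategoryTheory Limits

universe u₁ u₂ u₃ v₁ v₂ v₃

section Helpers

variable {𝒟 : Type u₁} [Category.{v₁} 𝒟] [Abelian 𝒟]

theorem tp_mem_T {T F : Set 𝒟} (h : IsTorsionPair T F) {X : 𝒟}
    (hX : ∀ {Y : 𝒟}, Y ∈ F → ∀ f : X ⟶ Y, f = 0) : X ∈ T := by
  obtain ⟨t, f, a, b, w, ht, hf, hse⟩ := h.exists_ses X
  have hb : b = 0 := hX hf b
  haveI := hse.mono_f
  haveI : Epi a := hse.exact.epi_f hb
  haveI := isIso_of_mono_of_epi a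
  exact h.mem_T_of_iso (asIso a) ht

theorem tp_quot {T F : Set 𝒟} (h : IsTorsionPair T F) {X Y : 𝒟}
    (hX : X ∈ T) (p : X ⟶ Y) [Epi p] : Y ∈ T := by
  refine tp_mem_T h (fun {Z} hZ f => ?_)
  have : p ≫ f = 0 := h.hom_eq_zero hX hZ _
  rw [← cancel_epi p, this, comp_zero]

theorem tp_sub {T F : Set 𝒟} (h : IsTorsionPair T F) {X Y : 𝒟}
    (hX : X ∈ F) (m : Y ⟶ X) [Mono m] : Y ∈ F := by
  obtain ⟨t, f, a, b, w, ht, hf, hse⟩ := h.exists_ses Y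
  have ha : a = 0 := by
    have : a ≫ m = 0 := h.hom_eq_zero ht hX _
    rw [← cancel_mono m, this, zero_comp]
  haveI := hse.epi_g
  haveI : Mono b := hse.exact.mono_g ha
  haveI := isIso_of_mono_of_epi b
  exact h.mem_F_of_iso (asIso b).symm hf

theorem tp_isZero {T F : Set 𝒟} (h : IsTorsionPair T F) {X : 𝒟}
    (h1 : X ∈ T) (h2 : X ∈ F) : IsZero X :=
  (IsZero.iff_id_eq_zero X).2 (h.hom_eq_zero h1 h2 _)

/-- An injective object lies in the torsion class of a tilting torsion pair. -/
theorem tp_injective_mem_T {T F : Set 𝒟} (h : IsTorsionPair T F)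
    (ht : ∀ M : 𝒟, ∃ X ∈ T, ∃ f : M ⟶ X, Mono f)
    (J : 𝒟) [Injective J] : J ∈ T := by
  obtain ⟨X, hX, f, hf⟩ := ht J
  haveI := hf
  have hfac : f ≫ Injective.factorThru (𝟙 J) f = 𝟙 J := Injective.comp_factorThru _ _
  haveI : IsSplitEpi (Injective.factorThru (𝟙 J) f) := ⟨⟨⟨f, hfac⟩⟩⟩
  exact tp_quot h hX (Injective.factorThru (𝟙 J) f)

end Helpers

/-- Glueing of tilting torsion pairs: given a recollement `(𝒜, ℬ, 𝒞)` with
`ℬ`, `𝒞` having enough injectives and `i^!`, `j_!` exact, if `(T', F')` and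
`(T'', F'')` are tilting torsion pairs in `𝒜` and `𝒞` respectively, then the
glued torsion pair `(T, F)` in `ℬ` is tilting, i.e. `T` contains all injective
objects of `ℬ`. -/
theorem stmt13 (𝒜 : Type u₁) (ℬ : Type u₂) (𝒞 : Type u₃)
    [Category.{v₁} 𝒜] [Category.{v₂} ℬ] [Category.{v₃} 𝒞]
    [Abelian 𝒜] [Abelian ℬ] [Abelian 𝒞]
    [EnoughInjectives ℬ] [EnoughInjectives 𝒞] (R : Recollement 𝒜 ℬ 𝒞)
    (hiShriek₁ : PreservesFiniteLimits R.iShriek)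
    (hiShriek₂ : PreservesFiniteColimits R.iShriek)
    (hjShriek₁ : PreservesFiniteLimits R.jShriek)
    (hjShriek₂ : PreservesFiniteColimits R.jShriek)
    (T' F' : Set 𝒜) (T'' F'' : Set 𝒞)
    (h' : IsTorsionPair T' F') (h'' : IsTorsionPair T'' F'')
    -- `(T', F')` and `(T'', F'')` are tilting
    (ht' : ∀ M : 𝒜, ∃ X ∈ T', ∃ f : M ⟶ X, Mono f)
    (ht'' : ∀ M : 𝒞, ∃ X ∈ T'', ∃ f : M ⟶ X, Mono f) :
    ∀ I : ℬ, Injective I →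
      I ∈ {B : ℬ | R.iStar.obj B ∈ T' ∧ R.jStar.obj B ∈ T''} := by
  intro I hI
  haveI := hI
  haveI := R.iIns_additive
  haveI := R.iStar_additive
  haveI := R.iShriek_additive
  haveI := R.jStar_additive
  haveI := R.iIns_full
  haveI := R.iIns_faithful
  haveI := hiShriek₂
  haveI := hjShriek₁
  -- mono/epi preservation
  haveI : R.iIns.PreservesMonomorphisms :=
    Functor.preservesMonomorphisms_of_adjunction R.adj₁
  haveI : R.jStar.PreservesMonomorphisms :=
    Functor.preservesMonomorphisms_of_adjunction R.adj₃
  -- `i^!` and `j^*` preserve injective objects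
  haveI : Injective (R.iShriek.obj I) := Injective.injective_of_adjoint R.adj₂ I
  haveI : Injective (R.jStar.obj I) := Injective.injective_of_adjoint R.adj₃ I
  -- hence `i^! I ∈ T'` and `j^* I ∈ T''`
  have hiT : R.iShriek.obj I ∈ T' := tp_injective_mem_T h' ht' _
  have hjT : R.jStar.obj I ∈ T'' := tp_injective_mem_T h'' ht'' _
  -- the key claim: every map from `i^* I` to a torsion-free object is zero
  have claim : ∀ {A : 𝒜}, A ∈ F' → ∀ f : R.iStar.obj I ⟶ A, f = 0 := by
    intro A hA f
    set g : I ⟶ R.iIns.obj A := (R.adj₁.homEquiv I A) f with hgdef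
    -- the image `S` of `g` lies in the essential image of `i_*`
    have hzA : IsZero (R.jStar.obj (R.iIns.obj A)) :=
      (R.essImage_iIns_eq_ker_jStar _).1 ⟨A, ⟨Iso.refl _⟩⟩
    have hzS : IsZero (R.jStar.obj (image g)) :=
      IsZero.of_mono (R.jStar.map (image.ι g)) hzA
    have hSim : R.iIns.essImage (image g) :=
      (R.essImage_iIns_eq_ker_jStar _).2 hzS
    haveI : IsIso (R.adj₂.counit.app (image g)) :=
      (R.adj₂.isIso_counit_app_iff_mem_essImage).2 hSim
    -- `i^!(image g)` is a subobject of `A`, hence in `F'`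
    have hNF : R.iShriek.obj (image g) ∈ F' :=
      tp_sub h' hA (R.iShriek.map (image.ι g) ≫ inv (R.adj₂.unit.app A))
    -- `i^!(image g)` is a quotient of `i^! I`, hence in `T'`
    have hNT : R.iShriek.obj (image g) ∈ T' :=
      tp_quot h' hiT (R.iShriek.map (factorThruImage g))
    -- so it is zero, and so is `image g`
    have hNz : IsZero (R.iShriek.obj (image g)) := tp_isZero h' hNT hNF
    have hSz : IsZero (image g) :=
      IsZero.of_epi (R.adj₂.counit.app (image g)) (R.iIns.map_isZero hNz)
    have hg : g = 0 := by
      rw [← image.fac g, hSz.eq_of_tgt (factorThruImage g) 0, zero_comp]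
    apply (R.adj₁.homEquiv I A).injective
    rw [← hgdef, hg, Adjunction.homEquiv_apply, Functor.map_zero, comp_zero]
  refine ⟨tp_mem_T h' (fun {Y} hY f => claim hY f), hjT⟩
end

section
/- Let (A, B, C) be a recollement of abelian categories where B and C have enough projective objects, and suppose i* and j_* are exact. Let (T', F') and (T'', F'') be cotilting torsion pairs in A and C respectively, and let (T, F) be the glued torsion pair in B, where T = {B : i*(B) ∈ T', j^*(B) ∈ T''} and F = {B : i^!(B) ∈ F', j^*(B) ∈ F''}. Then (T, F) is a cotilting torsion pair in B, i.e., F contains all projective objects of B. -/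
open CategoryTheory Limits

universe u₁ u₂ u₃ v₁ v₂ v₃

/-!
`j^* P` and `i^* P` are projective because their right adjoints `j_*` and `i_*` preserve
epimorphisms, so they lie in the cotilting classes `F''` and `F'`. The counit `i_* i^! P ⟶ P` is a
monomorphism, and applying the left exact functor `i^*` embeds `i^! P ≅ i^* i_* i^! P` into
`i^* P`; torsion-free classes are closed under subobjects.
-/

section TorsionPair

variable {𝒟 : Type u₁} [Category.{v₁} 𝒟] [Abelian 𝒟] {T F : Set 𝒟}

lemma IsTorsionPair.mem_F_of_hom_eq_zero (h : IsTorsionPair T F) {M : 𝒟}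
    (hM : ∀ X ∈ T, ∀ f : X ⟶ M, f = 0) : M ∈ F := by
  obtain ⟨X, Y, f, g, w, hX, hY, hses⟩ := h.exists_ses M
  have : Mono g := hses.exact.mono_g (hM X hX f)
  have : Epi g := hses.epi_g
  have : IsIso g := isIso_of_mono_of_epi g
  exact h.mem_F_of_iso (asIso g).symm hY

lemma IsTorsionPair.mem_F_of_mono (h : IsTorsionPair T F) {M N : 𝒟}
    (m : M ⟶ N) [Mono m] (hN : N ∈ F) : M ∈ F :=
  h.mem_F_of_hom_eq_zero fun _ hX f => by
    rw [← cancel_mono m, zero_comp]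
    exact h.hom_eq_zero hX hN _

/-- A projective object is a retract, hence a subobject, of any object of `F` covering it. -/
lemma IsTorsionPair.mem_F_of_projective (h : IsTorsionPair T F)
    (hcotilting : ∀ M : 𝒟, ∃ X ∈ F, ∃ f : X ⟶ M, Epi f) {P : 𝒟} (hP : Projective P) :
    P ∈ F := by
  obtain ⟨X, hX, f, hf⟩ := hcotilting P
  have := hP
  have : Mono (Projective.factorThru (𝟙 P) f) :=
    mono_of_mono_fac (Projective.factorThru_comp (𝟙 P) f)
  exact h.mem_F_of_mono (Projective.factorThru (𝟙 P) f) hX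

end TorsionPair

namespace Recollement

variable {𝒜 : Type u₁} {ℬ : Type u₂} {𝒞 : Type u₃}
  [Category.{v₁} 𝒜] [Category.{v₂} ℬ] [Category.{v₃} 𝒞]
  [Abelian 𝒜] [Abelian ℬ] [Abelian 𝒞] (R : Recollement 𝒜 ℬ 𝒞)

attribute [local instance] iIns_additive jStar_additive iIns_full iIns_faithful

lemma projective_iStar_obj {P : ℬ} (hP : Projective P) : Projective (R.iStar.obj P) :=
  have := R.adj₂.isLeftAdjoint
  R.adj₁.map_projective P hP

lemma projective_jStar_obj [R.jIns.PreservesEpimorphisms] {P : ℬ} (hP : Projective P) :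
    Projective (R.jStar.obj P) :=
  R.adj₄.map_projective P hP

lemma mem_essImage_iIns_of_mono {X : ℬ} {A : 𝒜} (m : X ⟶ R.iIns.obj A) [Mono m] :
    R.iIns.essImage X := by
  have := R.adj₃.isRightAdjoint
  refine (R.essImage_iIns_eq_ker_jStar X).mpr ?_
  have hA : IsZero (R.jStar.obj (R.iIns.obj A)) :=
    (R.essImage_iIns_eq_ker_jStar _).mp (R.iIns.obj_mem_essImage A)
  exact IsZero.of_mono (R.jStar.map m) hA

/-- The kernel lies in `Im i_* = Ker j^*`, and the counit is injective on maps out of `i_*`-objects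
by adjunction. -/
instance mono_iIns_counit (B : ℬ) : Mono (R.adj₂.counit.app B) := by
  obtain ⟨A, ⟨e⟩⟩ := R.mem_essImage_iIns_of_mono (kernel.ι (R.adj₂.counit.app B))
  have hpreimage : R.iIns.preimage (e.hom ≫ kernel.ι _) = 0 := by
    apply (R.adj₂.homEquiv A B).symm.injective
    simp only [Adjunction.homEquiv_counit, Functor.map_preimage, Category.assoc,
      kernel.condition, comp_zero, Functor.map_zero, zero_comp]
  refine Abelian.mono_of_kernel_ι_eq_zero _ ?_
  rw [← cancel_epi e.hom, comp_zero, ← R.iIns.map_preimage (e.hom ≫ kernel.ι _), hpreimage,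
    Functor.map_zero]

noncomputable def iShriekToIStar (B : ℬ) : R.iShriek.obj B ⟶ R.iStar.obj B :=
  inv (R.adj₁.counit.app (R.iShriek.obj B)) ≫ R.iStar.map (R.adj₂.counit.app B)

instance mono_iShriekToIStar [R.iStar.PreservesMonomorphisms] (B : ℬ) :
    Mono (R.iShriekToIStar B) := by
  unfold iShriekToIStar
  infer_instance

end Recollement

theorem stmt14_general (𝒜 : Type u₁) (ℬ : Type u₂) (𝒞 : Type u₃)
    [Category.{v₁} 𝒜] [Category.{v₂} ℬ] [Category.{v₃} 𝒞]
    [Abelian 𝒜] [Abelian ℬ] [Abelian 𝒞]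
    (R : Recollement 𝒜 ℬ 𝒞)
    (hiStar₁ : PreservesFiniteLimits R.iStar)
    (hjIns₂ : PreservesFiniteColimits R.jIns)
    (T' F' : Set 𝒜) (T'' F'' : Set 𝒞)
    (h' : IsTorsionPair T' F') (h'' : IsTorsionPair T'' F'')
    -- `(T', F')` and `(T'', F'')` are cotilting
    (hc' : ∀ M : 𝒜, ∃ X ∈ F', ∃ f : X ⟶ M, Epi f)
    (hc'' : ∀ M : 𝒞, ∃ X ∈ F'', ∃ f : X ⟶ M, Epi f) :
    ∀ P : ℬ, Projective P →
      P ∈ {B : ℬ | R.iShriek.obj B ∈ F' ∧ R.jStar.obj B ∈ F''} := by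
  intro P hP
  have hiP : R.iStar.obj P ∈ F' := h'.mem_F_of_projective hc' (R.projective_iStar_obj hP)
  exact ⟨h'.mem_F_of_mono (R.iShriekToIStar P) hiP,
    h''.mem_F_of_projective hc'' (R.projective_jStar_obj hP)⟩

/-- Glueing of cotilting torsion pairs: given a recollement `(𝒜, ℬ, 𝒞)` with
`ℬ`, `𝒞` having enough projectives and `i^*`, `j_*` exact, if `(T', F')` and
`(T'', F'')` are cotilting torsion pairs in `𝒜` and `𝒞` respectively, then the
glued torsion pair `(T, F)` in `ℬ` is cotilting, i.e. `F` contains all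
projective objects of `ℬ`. -/
theorem stmt14 (𝒜 : Type u₁) (ℬ : Type u₂) (𝒞 : Type u₃)
    [Category.{v₁} 𝒜] [Category.{v₂} ℬ] [Category.{v₃} 𝒞]
    [Abelian 𝒜] [Abelian ℬ] [Abelian 𝒞]
    [EnoughProjectives ℬ] [EnoughProjectives 𝒞] (R : Recollement 𝒜 ℬ 𝒞)
    (hiStar₁ : PreservesFiniteLimits R.iStar)
    (hiStar₂ : PreservesFiniteColimits R.iStar)
    (hjIns₁ : PreservesFiniteLimits R.jIns)
    (hjIns₂ : PreservesFiniteColimits R.jIns)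
    (T' F' : Set 𝒜) (T'' F'' : Set 𝒞)
    (h' : IsTorsionPair T' F') (h'' : IsTorsionPair T'' F'')
    -- `(T', F')` and `(T'', F'')` are cotilting
    (hc' : ∀ M : 𝒜, ∃ X ∈ F', ∃ f : X ⟶ M, Epi f)
    (hc'' : ∀ M : 𝒞, ∃ X ∈ F'', ∃ f : X ⟶ M, Epi f) :
    ∀ P : ℬ, Projective P →
      P ∈ {B : ℬ | R.iShriek.obj B ∈ F' ∧ R.jStar.obj B ∈ F''} :=
  stmt14_general 𝒜 ℬ 𝒞 R hiStar₁ hjIns₂ T' F' T'' F'' h' h'' hc' hc''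
end

section
/- Let (A, B, C) be a recollement of abelian categories where B and C have enough injective objects, let (T, F) be a tilting torsion pair in B, and suppose j_* j^*(F) ⊆ F. Then (j^*(T), j^*(F)) is a tilting torsion pair in C; in particular j^*(T) contains every injective object of C. -/
open CategoryTheory Limits

universe u₁ u₂ u₃ v₁ v₂ v₃

/-- The torsion class of a torsion pair is closed under quotients. -/
lemma IsTorsionPair.mem_T_of_epi {𝒜 : Type u₁} [Category.{v₁} 𝒜] [Abelian 𝒜]
    {T F : Set 𝒜} (h : IsTorsionPair T F) {X Q : 𝒜} (hX : X ∈ T) (e : X ⟶ Q)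
    [Epi e] : Q ∈ T := by
  obtain ⟨t, y, f, g, w, ht, hy, hse⟩ := h.exists_ses Q
  have hg0 : g = 0 := by
    have h1 : e ≫ g = 0 := h.hom_eq_zero hX hy (e ≫ g)
    rw [← cancel_epi e, comp_zero]
    exact h1
  have := hse.mono_f
  have hepi : Epi f := hse.exact.epi_f hg0
  have : IsIso f := isIso_of_mono_of_epi f
  exact h.mem_T_of_iso (asIso f) ht

/-- Let `(𝒜, ℬ, 𝒞)` be a recollement with `ℬ` and `𝒞` having enough
injectives, let `(T, F)` be a tilting torsion pair in `ℬ`, and suppose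
`j_* j^*(F) ⊆ F`. Then `(j^*(T), j^*(F))` (essential images) is a tilting
torsion pair in `𝒞`; in particular `j^*(T)` contains every injective object
of `𝒞`. -/
theorem stmt16 (𝒜 : Type u₁) (ℬ : Type u₂) (𝒞 : Type u₃)
    [Category.{v₁} 𝒜] [Category.{v₂} ℬ] [Category.{v₃} 𝒞]
    [Abelian 𝒜] [Abelian ℬ] [Abelian 𝒞]
    [EnoughInjectives ℬ] [EnoughInjectives 𝒞] (R : Recollement 𝒜 ℬ 𝒞)
    (T F : Set ℬ) (htf : IsTorsionPair T F)
    (htilt : ∀ M : ℬ, ∃ X ∈ T, ∃ f : M ⟶ X, Mono f)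
    (hjF : ∀ b ∈ F, R.jIns.obj (R.jStar.obj b) ∈ F) :
    IsTorsionPair {c : 𝒞 | ∃ b ∈ T, Nonempty (R.jStar.obj b ≅ c)}
        {c : 𝒞 | ∃ b ∈ F, Nonempty (R.jStar.obj b ≅ c)} ∧
    (∀ M : 𝒞, ∃ X ∈ {c : 𝒞 | ∃ b ∈ T, Nonempty (R.jStar.obj b ≅ c)},
      ∃ f : M ⟶ X, Mono f) ∧
    (∀ I : 𝒞, Injective I →
      I ∈ {c : 𝒞 | ∃ b ∈ T, Nonempty (R.jStar.obj b ≅ c)}) := by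
  haveI := R.jStar_additive
  haveI := R.jIns_full
  haveI := R.jIns_faithful
  haveI : PreservesLimitsOfSize.{0, 0} R.jStar := R.adj₃.rightAdjoint_preservesLimits
  haveI : PreservesColimitsOfSize.{0, 0} R.jStar := R.adj₄.leftAdjoint_preservesColimits
  haveI : IsIso R.adj₄.counit := inferInstance
  set T' : Set 𝒞 := {c : 𝒞 | ∃ b ∈ T, Nonempty (R.jStar.obj b ≅ c)} with hT'
  set F' : Set 𝒞 := {c : 𝒞 | ∃ b ∈ F, Nonempty (R.jStar.obj b ≅ c)} with hF'
  have memT' : ∀ {b : ℬ}, b ∈ T → R.jStar.obj b ∈ T' := fun hb => ⟨_, hb, ⟨Iso.refl _⟩⟩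
  have memF' : ∀ {b : ℬ}, b ∈ F → R.jStar.obj b ∈ F' := fun hb => ⟨_, hb, ⟨Iso.refl _⟩⟩
  -- key vanishing lemma
  have key : ∀ {b b' : ℬ}, b ∈ T → b' ∈ F → ∀ g : R.jStar.obj b ⟶ R.jStar.obj b', g = 0 := by
    intro b b' hb hb' g
    have h0 : (R.adj₄.homEquiv b (R.jStar.obj b')) g = 0 :=
      htf.hom_eq_zero hb (hjF b' hb') _
    have : g = (R.adj₄.homEquiv b (R.jStar.obj b')).symm
        ((R.adj₄.homEquiv b (R.jStar.obj b')) g) := (Equiv.symm_apply_apply _ _).symm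
    rw [this, h0, Adjunction.homEquiv_counit, Functor.map_zero, zero_comp]
  have tp : IsTorsionPair T' F' := by
    constructor
    · rintro X Y e ⟨b, hb, ⟨i⟩⟩
      exact ⟨b, hb, ⟨i ≪≫ e⟩⟩
    · rintro X Y e ⟨b, hb, ⟨i⟩⟩
      exact ⟨b, hb, ⟨i ≪≫ e⟩⟩
    · rintro X Y ⟨b, hb, ⟨eX⟩⟩ ⟨b', hb', ⟨eY⟩⟩ f
      have h0 : eX.hom ≫ f ≫ eY.inv = 0 := key hb hb' _
      calc f = eX.inv ≫ (eX.hom ≫ f ≫ eY.inv) ≫ eY.hom := by simp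
        _ = 0 := by rw [h0, zero_comp, comp_zero]
    · intro M
      obtain ⟨X, Y, f, g, w, hX, hY, hse⟩ := htf.exists_ses (R.jIns.obj M)
      have hmap := hse.map_of_exact R.jStar
      let ε : R.jStar.obj (R.jIns.obj M) ≅ M := asIso (R.adj₄.counit.app M)
      refine ⟨R.jStar.obj X, R.jStar.obj Y, R.jStar.map f ≫ ε.hom,
        ε.inv ≫ R.jStar.map g, ?_, memT' hX, memF' hY, ?_⟩
      · rw [Category.assoc, ε.hom_inv_id_assoc, ← Functor.map_comp, w,
          Functor.map_zero]
      · refine ShortComplex.shortExact_of_iso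
          (ShortComplex.isoMk (S₁ := (ShortComplex.mk f g w).map R.jStar)
            (Iso.refl _) ε (Iso.refl _) ?_ ?_) hmap
        · simp [ShortComplex.map]
        · simp [ShortComplex.map, ε]
  have tilt : ∀ M : 𝒞, ∃ X ∈ T', ∃ f : M ⟶ X, Mono f := by
    intro M
    obtain ⟨X, hX, u, hu⟩ := htilt (R.jIns.obj M)
    haveI := hu
    haveI : Mono (R.jStar.map u) := preserves_mono_of_preservesLimit R.jStar u
    haveI : IsIso (R.adj₄.counit.app M) := inferInstance
    exact ⟨R.jStar.obj X, memT' hX, inv (R.adj₄.counit.app M) ≫ R.jStar.map u,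
      mono_comp _ _⟩
  refine ⟨tp, tilt, ?_⟩
  intro I hI
  obtain ⟨X, hX, m, hm⟩ := tilt I
  haveI := hm
  haveI := hI
  have hfac : m ≫ Injective.factorThru (𝟙 I) m = 𝟙 I := Injective.comp_factorThru _ _
  haveI : Epi (m ≫ Injective.factorThru (𝟙 I) m) := by rw [hfac]; infer_instance
  haveI : Epi (Injective.factorThru (𝟙 I) m) := epi_of_epi m _
  exact tp.mem_T_of_epi hX (Injective.factorThru (𝟙 I) m)
end
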